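/- arXiv:1112.2065 — 2 statements merged into one kernel-verified Lean document; each statement's English description precedes it below -/
import Mathlib

section
/- The index Σ-ordering ≺_i of P is a monomial Σ-ordering of P. That is: assume X = {x₀, x₁, …}, fix a monomial Σ-ordering ≺ of the subalgebra P(x₀) = K[x₀(Σ)], extended to each P(x_j) = K[x_j(Σ)] via the index-shift isomorphism x₀(σ) ↦ x_j(σ); writing each monomial m ∈ M uniquely as m = m(x_{i₁})⋯m(x_{i_k}) with m(x_{i_p}) ∈ M(x_{i_p}) and i₁ > … > i_k, define m ≺_i n (for m = m(x_{i₁})⋯m(x_{i_k}), n = n(x_{i₁})⋯n(x_{i_k})) if m(x_{i_q}) = n(x_{i_q}) for q < p and m(x_{i_p}) ≺ n(x_{i_p}) for some p. Then ≺_i is a monomial ordering of P satisfying: m ≺_i n implies σ·m ≺_i σ·n for all σ ∈ Σ. -/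
/- Common setup: the monoid Σ = ⟨σ₁,…,σ_r⟩ ≅ (ℕ^r,+) is modelled additively as
`Fin r → ℕ`; the algebra of partial difference polynomials `P = K[X(Σ)]` is the
polynomial ring `MvPolynomial (X × (Fin r → ℕ)) K`, and its monomials are elements
of `(X × (Fin r → ℕ)) →₀ ℕ`. -/

noncomputable section

/-- The total degree `deg : Σ → ℕ` of an element of the monoid `Σ ≅ ℕ^r`. -/
def degS {r : ℕ} (σ : Fin r → ℕ) : ℕ := ∑ i, σ i

/-- The shift action of `σ ∈ Σ` on monomials: `σ · ∏ xᵢ(τᵢ)^{aᵢ} = ∏ xᵢ(στᵢ)^{aᵢ}`. -/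
def shiftMon {V : Type*} {r : ℕ} (σ : Fin r → ℕ) (m : (V × (Fin r → ℕ)) →₀ ℕ) :
    (V × (Fin r → ℕ)) →₀ ℕ :=
  Finsupp.mapDomain (fun p => (p.1, σ + p.2)) m

/-- The shift action of `σ ∈ Σ` on `P` by `K`-algebra endomorphisms,
determined by `σ · x(τ) = x(στ)`. -/
def shiftPoly (K : Type*) [CommSemiring K] {V : Type*} {r : ℕ} (σ : Fin r → ℕ) :
    MvPolynomial (V × (Fin r → ℕ)) K →ₐ[K] MvPolynomial (V × (Fin r → ℕ)) K :=
  MvPolynomial.rename (fun p => (p.1, σ + p.2))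

/-- The orbit set `Σ · G` of a set of polynomials `G`. -/
def shiftSet (K : Type*) [CommSemiring K] {V : Type*} {r : ℕ}
    (G : Set (MvPolynomial (V × (Fin r → ℕ)) K)) :
    Set (MvPolynomial (V × (Fin r → ℕ)) K) :=
  {p | ∃ (σ : Fin r → ℕ) (g : MvPolynomial (V × (Fin r → ℕ)) K), g ∈ G ∧ p = shiftPoly K σ g}

/-- The least common multiple of two monomials (pointwise maximum of exponents). -/
def lcmMon {V : Type*} {r : ℕ} (m n : (V × (Fin r → ℕ)) →₀ ℕ) : (V × (Fin r → ℕ)) →₀ ℕ :=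
  Finsupp.zipWith max (max_self 0) m n

/-- The greatest common divisor of two monomials (pointwise minimum of exponents). -/
def gcdMon {V : Type*} {r : ℕ} (m n : (V × (Fin r → ℕ)) →₀ ℕ) : (V × (Fin r → ℕ)) →₀ ℕ :=
  Finsupp.zipWith min (min_self 0) m n

/-- The strict relation of a linear order given as a term. -/
def oLT {α : Type*} (lo : LinearOrder α) (a b : α) : Prop := lo.lt a b

/-- The non-strict relation of a linear order given as a term. -/
def oLE {α : Type*} (lo : LinearOrder α) (a b : α) : Prop := lo.le a b

/-- `lo` is a *monomial ordering* of an additive (monomial) monoid: a linear order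
which is a well-order, has the monomial `1` (written additively: `0`) as least
element, and is compatible with multiplication (written additively). -/
structure IsMonOrd {α : Type*} [AddCommMonoid α] (lo : LinearOrder α) : Prop where
  wf : WellFounded (oLT lo)
  zero_le : ∀ a : α, oLE lo 0 a
  add_lt : ∀ a b c : α, oLT lo a b → oLT lo (c + a) (c + b)

/-- The leading monomial of a polynomial with respect to a monomial ordering
(junk value `1`, i.e. `0`, on the zero polynomial). -/
def lmo {K V : Type*} [CommSemiring K] {r : ℕ} (lo : LinearOrder ((V × (Fin r → ℕ)) →₀ ℕ))
    (f : MvPolynomial (V × (Fin r → ℕ)) K) : (V × (Fin r → ℕ)) →₀ ℕ :=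
  haveI : Decidable (f = 0) := Classical.dec _
  if h : f = 0 then 0
  else @Finset.max' _ lo f.support
    (Finset.nonempty_iff_ne_empty.2 fun he => h (MvPolynomial.support_eq_empty.mp he))

/-- The leading coefficient of a polynomial. -/
def lco {K V : Type*} [CommSemiring K] {r : ℕ} (lo : LinearOrder ((V × (Fin r → ℕ)) →₀ ℕ))
    (f : MvPolynomial (V × (Fin r → ℕ)) K) : K :=
  MvPolynomial.coeff (lmo lo f) f

/-- The S-polynomial `spoly(f,g) = (l/lt(f))·f − (l/lt(g))·g`, where
`l = lcm(lm f, lm g)`. -/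
def spoly {K V : Type*} [Field K] {r : ℕ} (lo : LinearOrder ((V × (Fin r → ℕ)) →₀ ℕ))
    (f g : MvPolynomial (V × (Fin r → ℕ)) K) : MvPolynomial (V × (Fin r → ℕ)) K :=
  MvPolynomial.monomial (lcmMon (lmo lo f) (lmo lo g) - lmo lo f) (lco lo f)⁻¹ * f -
  MvPolynomial.monomial (lcmMon (lmo lo f) (lmo lo g) - lmo lo g) (lco lo g)⁻¹ * g

/-- `f` has a Gröbner representation `f = ∑ qᵢ gᵢ` with respect to `G`:
`gᵢ ∈ G` and `lm(f) ⪰ lm(qᵢ)·lm(gᵢ)` for all (nontrivial) `i`. -/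
def HasGroebnerRep {K V : Type*} [Field K] {r : ℕ}
    (lo : LinearOrder ((V × (Fin r → ℕ)) →₀ ℕ))
    (G : Set (MvPolynomial (V × (Fin r → ℕ)) K))
    (f : MvPolynomial (V × (Fin r → ℕ)) K) : Prop :=
  ∃ (n : ℕ) (q g : Fin n → MvPolynomial (V × (Fin r → ℕ)) K),
    (∀ i, g i ∈ G) ∧ f = ∑ i, q i * g i ∧
    ∀ i, q i ≠ 0 → g i ≠ 0 → oLE lo (lmo lo (q i) + lmo lo (g i)) (lmo lo f)

/-- The ideal `LM(S)` generated by the leading monomials of the nonzero elements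
of `S`. -/
def lmIdeal {K V : Type*} [Field K] {r : ℕ} (lo : LinearOrder ((V × (Fin r → ℕ)) →₀ ℕ))
    (S : Set (MvPolynomial (V × (Fin r → ℕ)) K)) : Ideal (MvPolynomial (V × (Fin r → ℕ)) K) :=
  Ideal.span ((fun g => (MvPolynomial.monomial (lmo lo g) (1 : K))) '' {g | g ∈ S ∧ g ≠ 0})

/-- `G ⊆ I` is a Gröbner basis of `I`: `LM(I)` is generated by `lm(G)`. -/
def IsGBasis {K V : Type*} [Field K] {r : ℕ} (lo : LinearOrder ((V × (Fin r → ℕ)) →₀ ℕ))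
    (G : Set (MvPolynomial (V × (Fin r → ℕ)) K))
    (I : Ideal (MvPolynomial (V × (Fin r → ℕ)) K)) : Prop :=
  G ⊆ ↑I ∧ lmIdeal lo (I : Set (MvPolynomial (V × (Fin r → ℕ)) K)) = lmIdeal lo G

/-- `G ⊆ I` is a Gröbner Σ-basis of `I`: `LM(I)` is generated by `Σ·lm(G)`. -/
def IsSigmaGBasis {K V : Type*} [Field K] {r : ℕ} (lo : LinearOrder ((V × (Fin r → ℕ)) →₀ ℕ))
    (G : Set (MvPolynomial (V × (Fin r → ℕ)) K))
    (I : Ideal (MvPolynomial (V × (Fin r → ℕ)) K)) : Prop :=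
  G ⊆ ↑I ∧
  lmIdeal lo (I : Set (MvPolynomial (V × (Fin r → ℕ)) K)) =
    Ideal.span {p | ∃ (σ : Fin r → ℕ) (g : MvPolynomial (V × (Fin r → ℕ)) K),
      g ∈ G ∧ g ≠ 0 ∧ p = MvPolynomial.monomial (shiftMon σ (lmo lo g)) (1 : K)}

/-- `I` is a Σ-ideal: it is invariant under all the shift endomorphisms. -/
def IsSigmaIdeal {K V : Type*} [CommSemiring K] {r : ℕ}
    (I : Ideal (MvPolynomial (V × (Fin r → ℕ)) K)) : Prop :=
  ∀ (σ : Fin r → ℕ) (p : MvPolynomial (V × (Fin r → ℕ)) K), p ∈ I → shiftPoly K σ p ∈ I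

/-- The weight function `w : M → Σ̂ = Σ ∪ {0}` (here `Σ̂` is `WithBot (Fin r → ℕ)`,
with `⊥` the extra element "0"):  `w(m)` is the `<`-maximum of the weights of the
variables occurring in `m`, where `<` is the given monomial ordering `loS` of `Σ`. -/
def wfun {V : Type*} {r : ℕ} (loS : LinearOrder (Fin r → ℕ))
    (m : (V × (Fin r → ℕ)) →₀ ℕ) : WithBot (Fin r → ℕ) :=
  @Finset.max _ loS (m.support.image (fun p => p.2))

/-- Addition in the idempotent semiring `Σ̂`: the maximum with respect to the
monomial ordering `loS` of `Σ`, with `⊥` as neutral element. -/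
def hatAdd {r : ℕ} (loS : LinearOrder (Fin r → ℕ)) (a b : WithBot (Fin r → ℕ)) :
    WithBot (Fin r → ℕ) :=
  @Max.max _ (@WithBot.linearOrder _ loS).toMax a b

/-- The order `≤` on `Σ̂` induced by the monomial ordering `loS` of `Σ`. -/
def hatLe {r : ℕ} (loS : LinearOrder (Fin r → ℕ)) (a b : WithBot (Fin r → ℕ)) : Prop :=
  @LE.le _ (@WithBot.linearOrder _ loS).toLE a b

/-- The strict order `<` on `Σ̂` induced by the monomial ordering `loS` of `Σ`. -/
def hatLt {r : ℕ} (loS : LinearOrder (Fin r → ℕ)) (a b : WithBot (Fin r → ℕ)) : Prop :=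
  @LT.lt _ (@WithBot.linearOrder _ loS).toLT a b

/-- The order function `ord : M → ℕ ∪ {−∞}`:  the maximum of `deg σ` over the
variables `x(σ)` occurring in `m` (and `−∞ = ⊥` for `m = 1`). -/
def ordFun {V : Type*} {r : ℕ} (m : (V × (Fin r → ℕ)) →₀ ℕ) : WithBot ℕ :=
  (m.support.image (fun p => degS p.2)).max

/-- A polynomial is `w`-homogeneous if all its monomials have the same weight. -/
def IsWHomog {K V : Type*} [CommSemiring K] {r : ℕ} (loS : LinearOrder (Fin r → ℕ))
    (f : MvPolynomial (V × (Fin r → ℕ)) K) : Prop :=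
  ∀ m ∈ f.support, ∀ n ∈ f.support, wfun loS m = wfun loS n

/-- A polynomial is `ord`-homogeneous if all its monomials have the same order. -/
def IsOrdHomog {K V : Type*} [CommSemiring K] {r : ℕ}
    (f : MvPolynomial (V × (Fin r → ℕ)) K) : Prop :=
  ∀ m ∈ f.support, ∀ n ∈ f.support, ordFun m = ordFun n

/-- The block `m(δ) ∈ M(δ) ≅ Mon(K[X])` of a monomial `m`, collecting the variables
of weight exactly `δ`. -/
def blockAt {X : Type*} {r : ℕ} (δ : Fin r → ℕ) (m : (X × (Fin r → ℕ)) →₀ ℕ) : X →₀ ℕ :=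
  Finsupp.comapDomain (fun x => (x, δ)) m (fun _ _ _ _ h => congrArg Prod.fst h)

/-- The weight Σ-ordering `≺_w` determined by a monomial ordering `ltS` of `Σ` and a
monomial ordering `lt1` of `P(1) = K[X(1)]` (transported to every block `P(δ)` via the
isomorphism `ρ(δ)`): compare the blocks of highest weight where the monomials differ. -/
def wlt {X : Type*} {r : ℕ} (ltS : (Fin r → ℕ) → (Fin r → ℕ) → Prop)
    (lt1 : (X →₀ ℕ) → (X →₀ ℕ) → Prop)
    (m n : (X × (Fin r → ℕ)) →₀ ℕ) : Prop :=
  ∃ δ : Fin r → ℕ, lt1 (blockAt δ m) (blockAt δ n) ∧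
    ∀ ε : Fin r → ℕ, ltS δ ε → blockAt ε m = blockAt ε n

/-- The block `m(x_j) ∈ M(x_j) ≅ Mon(K[x₀(Σ)])` of a monomial `m` (here `X = ℕ`),
collecting the variables of index exactly `j`. -/
def blockIdx {r : ℕ} (j : ℕ) (m : (ℕ × (Fin r → ℕ)) →₀ ℕ) : (Fin r → ℕ) →₀ ℕ :=
  Finsupp.comapDomain (fun σ => (j, σ)) m (fun _ _ _ _ h => congrArg Prod.snd h)

/-- The shift action of `σ ∈ Σ` on the monomials of `P(x₀) = K[x₀(Σ)]`. -/
def shiftMon0 {r : ℕ} (σ : Fin r → ℕ) (m : (Fin r → ℕ) →₀ ℕ) : (Fin r → ℕ) →₀ ℕ :=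
  Finsupp.mapDomain (fun τ => σ + τ) m

/-- The index Σ-ordering `≺_i` determined by a monomial Σ-ordering `lt0` of
`P(x₀) = K[x₀(Σ)]` (transported to every `P(x_j)` by the index shift): compare the
blocks of highest index where the monomials differ. -/
def ilt {r : ℕ} (lt0 : ((Fin r → ℕ) →₀ ℕ) → ((Fin r → ℕ) →₀ ℕ) → Prop)
    (m n : (ℕ × (Fin r → ℕ)) →₀ ℕ) : Prop :=
  ∃ j : ℕ, lt0 (blockIdx j m) (blockIdx j n) ∧ ∀ k : ℕ, j < k → blockIdx k m = blockIdx k n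

/- Homogenization setup:  `X̄ = X ∪ {t}` is modelled as `Option X`, with `none`
playing the role of the homogenizing variable `t` and `some x` that of `x ∈ X`;
thus `P̄ = K[X̄(Σ)] = MvPolynomial (Option X × (Fin r → ℕ)) K ⊇ P`. -/

/-- The inclusion `P = K[X(Σ)] ⊆ P̄ = K[X̄(Σ)]`. -/
def embP (K : Type*) [CommSemiring K] {X : Type*} {r : ℕ} :
    MvPolynomial (X × (Fin r → ℕ)) K →ₐ[K] MvPolynomial (Option X × (Fin r → ℕ)) K :=
  MvPolynomial.rename (fun p => (some p.1, p.2))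

/-- The inclusion `Mon(P) ⊆ Mon(P̄)` on monomials. -/
def embMon {X : Type*} {r : ℕ} (m : (X × (Fin r → ℕ)) →₀ ℕ) :
    (Option X × (Fin r → ℕ)) →₀ ℕ :=
  Finsupp.mapDomain (fun p => (some p.1, p.2)) m

/-- The dehomogenization Σ-endomorphism `φ : P̄ → P̄` with `x(σ) ↦ x(σ)`,
`t(σ) ↦ 1`. -/
def phiBar (K : Type*) [CommSemiring K] {X : Type*} {r : ℕ} :
    MvPolynomial (Option X × (Fin r → ℕ)) K →ₐ[K]
      MvPolynomial (Option X × (Fin r → ℕ)) K :=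
  MvPolynomial.aeval (fun p => p.1.elim 1 (fun x => MvPolynomial.X (some x, p.2)))

/-- The dehomogenization map `P̄ → P` with `x(σ) ↦ x(σ)`, `t(σ) ↦ 1`. -/
def dehom (K : Type*) [CommSemiring K] {X : Type*} {r : ℕ} :
    MvPolynomial (Option X × (Fin r → ℕ)) K →ₐ[K] MvPolynomial (X × (Fin r → ℕ)) K :=
  MvPolynomial.aeval (fun p => p.1.elim 1 (fun x => MvPolynomial.X (x, p.2)))

/-- `N`, the largest `ord`-graded Σ-ideal of `P̄` contained in `ker φ`: the ideal
generated by all `ord`-homogeneous elements of `ker φ`. -/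
def Nideal (K : Type*) [CommSemiring K] (X : Type*) (r : ℕ) :
    Ideal (MvPolynomial (Option X × (Fin r → ℕ)) K) :=
  Ideal.span {f | IsOrdHomog f ∧ phiBar K f = 0}

/-- The top order of a polynomial: the maximum of the orders of its monomials. -/
def topord {K V : Type*} [CommSemiring K] {r : ℕ}
    (f : MvPolynomial (V × (Fin r → ℕ)) K) : WithBot ℕ :=
  f.support.sup (fun m => ordFun m)

/-- The `ord`-homogenization `I*` of an ideal `I ⊆ P`: the ideal of `P̄` generated by
all `ord`-homogeneous elements of `φ⁻¹(I)`. -/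
def Istar {K : Type*} [Field K] {X : Type*} {r : ℕ}
    (I : Ideal (MvPolynomial (X × (Fin r → ℕ)) K)) :
    Ideal (MvPolynomial (Option X × (Fin r → ℕ)) K) :=
  Ideal.span {f | IsOrdHomog f ∧ dehom K f ∈ I}

/-- A monomial of `P̄` is `t`-free when it lies in `M = Mon(P)`. -/
def TFree {X : Type*} {r : ℕ} (m : (Option X × (Fin r → ℕ)) →₀ ℕ) : Prop :=
  ∀ p ∈ m.support, p.1 ≠ (none : Option X)

/-- A monomial of `P̄` is normal modulo `N` if it is of the form `m ∈ M`, or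
`t(σ)·n` with `n ∈ M`, `deg σ > ord n` and `t(σ)` the `≺`-least variable `t(τ)`
with `deg τ = deg σ`. -/
def NormalMon {X : Type*} {r : ℕ} (lo : LinearOrder ((Option X × (Fin r → ℕ)) →₀ ℕ))
    (m : (Option X × (Fin r → ℕ)) →₀ ℕ) : Prop :=
  TFree m ∨ ∃ (σ : Fin r → ℕ) (n : (Option X × (Fin r → ℕ)) →₀ ℕ),
    TFree n ∧ ordFun n < (degS σ : WithBot ℕ) ∧
    m = Finsupp.single ((none : Option X), σ) 1 + n ∧
    ∀ τ : Fin r → ℕ, degS τ = degS σ →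
      oLE lo (Finsupp.single ((none : Option X), σ) 1)
        (Finsupp.single ((none : Option X), τ) 1)

/-- `lo` is an `ord`-homogenization Σ-ordering of `P̄`: it is compatible with the
order function, and `t(σ)·m ≺ n` whenever `m, n ∈ M` and `deg σ = ord n > ord m`. -/
def IsHomogOrd {X : Type*} {r : ℕ}
    (lo : LinearOrder ((Option X × (Fin r → ℕ)) →₀ ℕ)) : Prop :=
  (∀ m n : (Option X × (Fin r → ℕ)) →₀ ℕ, ordFun m < ordFun n → oLT lo m n) ∧
  ∀ (m n : (Option X × (Fin r → ℕ)) →₀ ℕ) (σ : Fin r → ℕ),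
    TFree m → TFree n → (degS σ : WithBot ℕ) = ordFun n → ordFun m < ordFun n →
    oLT lo (Finsupp.single ((none : Option X), σ) 1 + m) n

end

/-!
Currying identifies a monomial `m` with its sequence of blocks `j ↦ m(x_j)`, and `≺_i` is the
lexicographic order on such finitely supported sequences, compared from the highest index down.
A lexicographic order built from a monomial ordering of the blocks, over an index set whose
reverse order is well-founded, is again a monomial ordering; finite support is what makes it
total and well-founded although `ℕ` has no largest index. Currying is additive and the Σ-action
acts block by block, so compatibility with multiplication and with the shifts carries over.
-/

open Finsupp OrderDual

section LinearOrderTerm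

variable {β : Type*} (lo : LinearOrder β)

theorem oLT_irrefl (a : β) : ¬ oLT lo a a :=
  @lt_irrefl _ lo.toPreorder a

theorem oLT_trans {a b c : β} : oLT lo a b → oLT lo b c → oLT lo a c :=
  @lt_trans _ lo.toPreorder a b c

theorem oLT_trichotomy (a b : β) : oLT lo a b ∨ a = b ∨ oLT lo b a :=
  @lt_trichotomy _ lo a b

theorem oLE_iff_not_oLT {a b : β} : oLE lo a b ↔ ¬ oLT lo b a :=
  (@not_lt _ lo b a).symm

end LinearOrderTerm

theorem IsMonOrd.not_oLT_zero {β : Type*} [AddCommMonoid β] {lo : LinearOrder β}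
    (h : IsMonOrd lo) (a : β) : ¬ oLT lo a 0 :=
  (oLE_iff_not_oLT lo).1 (h.zero_le a)

namespace Finsupp

theorem lex_mapRange {α N N' : Type*} [Zero N] [Zero N'] {r : α → α → Prop}
    {s : N → N → Prop} {s' : N' → N' → Prop} {g : N → N'} (hg0 : g 0 = 0)
    (hg : ∀ a b, s a b → s' (g a) (g b)) {x y : α →₀ N} (h : Finsupp.Lex r s x y) :
    Finsupp.Lex r s' (mapRange g hg0 x) (mapRange g hg0 y) := by
  obtain ⟨i, heq, hlt⟩ := h
  exact ⟨i, fun j hj => congrArg g (heq j hj), hg _ _ hlt⟩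

/-- A term rather than an instance on `Lex (α →₀ N)`: `N` may already carry another order, as
`(Fin r → ℕ) →₀ ℕ` does (pointwise), and instance search would pick that one. -/
noncomputable abbrev lexOrder {α N : Type*} [LinearOrder α] [Zero N] (lo : LinearOrder N) :
    LinearOrder (α →₀ N) :=
  letI := lo
  LinearOrder.lift' (toLex : (α →₀ N) → Lex (α →₀ N)) toLex.injective

theorem oLT_lexOrder_iff {α N : Type*} [LinearOrder α] [Zero N] (lo : LinearOrder N)
    {x y : α →₀ N} : oLT (lexOrder lo) x y ↔ Finsupp.Lex (· < ·) (oLT lo) x y :=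
  Iff.rfl

theorem _root_.IsMonOrd.lexOrder {α N : Type*} [LinearOrder α] [WellFoundedGT α]
    [AddCommMonoid N] {lo : LinearOrder N} (h : IsMonOrd lo) :
    IsMonOrd (lexOrder (α := α) lo) where
  wf := Finsupp.Lex.wellFounded' h.not_oLT_zero h.wf wellFounded_gt
  zero_le _ := (oLE_iff_not_oLT _).2 fun ⟨_, _, hlt⟩ => h.not_oLT_zero _ hlt
  add_lt _ _ z := fun ⟨i, heq, hlt⟩ =>
    ⟨i, fun j hj => congrArg (z j + ·) (heq j hj), h.add_lt _ _ _ hlt⟩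

end Finsupp

section IndexOrdering

variable {r : ℕ}

/-- The blocks `m(x_j)` of a monomial, indexed by `ℕᵒᵈ` because `≺_i` compares the block of
highest index first. -/
noncomputable def blocks (m : (ℕ × (Fin r → ℕ)) →₀ ℕ) : ℕᵒᵈ →₀ (Fin r → ℕ) →₀ ℕ :=
  m.curry

theorem blocks_apply (m : (ℕ × (Fin r → ℕ)) →₀ ℕ) (j : ℕ) :
    blocks m (toDual j) = blockIdx j m := by
  ext σ; rfl

theorem blocks_injective : Function.Injective (blocks (r := r)) :=
  curryAddEquiv.injective

theorem blocks_add (m n : (ℕ × (Fin r → ℕ)) →₀ ℕ) : blocks (m + n) = blocks m + blocks n :=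
  map_add curryAddEquiv m n

theorem blocks_zero : blocks (0 : (ℕ × (Fin r → ℕ)) →₀ ℕ) = 0 :=
  map_zero (curryAddEquiv (α := ℕ) (β := Fin r → ℕ) (M := ℕ))

theorem shiftMon0_zero (σ : Fin r → ℕ) : shiftMon0 σ 0 = 0 :=
  mapDomain_zero

theorem blockIdx_shiftMon (j : ℕ) (σ : Fin r → ℕ) (m : (ℕ × (Fin r → ℕ)) →₀ ℕ) :
    blockIdx j (shiftMon σ m) = shiftMon0 σ (blockIdx j m) := by
  have hinj : Function.Injective fun p : ℕ × (Fin r → ℕ) => (p.1, σ + p.2) :=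
    Function.injective_id.prodMap (add_right_injective σ)
  ext τ
  change mapDomain _ m (j, τ) = mapDomain _ (blockIdx j m) τ
  by_cases hστ : σ ≤ τ
  · obtain ⟨τ', rfl⟩ := exists_add_of_le hστ
    rw [mapDomain_apply hinj m (j, τ'), mapDomain_apply (add_right_injective σ)]
    rfl
  · rw [mapDomain_of_notMem_range, mapDomain_of_notMem_range]
    · rintro ⟨τ', rfl⟩; exact hστ le_self_add
    · rintro ⟨p, hp⟩
      simp only [Prod.mk.injEq] at hp
      exact hστ (hp.2 ▸ le_self_add)

theorem blocks_shiftMon (σ : Fin r → ℕ) (m : (ℕ × (Fin r → ℕ)) →₀ ℕ) :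
    blocks (shiftMon σ m) = mapRange (shiftMon0 σ) (shiftMon0_zero σ) (blocks m) := by
  ext j : 1
  rw [mapRange_apply, ← toDual_ofDual j, blocks_apply, blocks_apply, blockIdx_shiftMon]

theorem ilt_eq_invImage_blocks (lo : LinearOrder ((Fin r → ℕ) →₀ ℕ)) :
    ilt (oLT lo) = InvImage (oLT (lexOrder lo)) (blocks (r := r)) := by
  ext m n
  simp only [InvImage, oLT_lexOrder_iff, Finsupp.lex_def, ilt, ← blocks_apply]
  exact ⟨fun ⟨j, hlt, heq⟩ => ⟨toDual j, fun k hk => heq (ofDual k) hk, hlt⟩,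
    fun ⟨j, heq, hlt⟩ => ⟨ofDual j, hlt, fun k hk => heq (toDual k) hk⟩⟩

end IndexOrdering

/-- The index Σ-ordering `≺_i` of `P` (here `X = {x₀,x₁,…} = ℕ`),
defined from a monomial Σ-ordering of `P(x₀) = K[x₀(Σ)]` (extended to the blocks
`P(x_j)` by the index-shift isomorphisms), is a monomial Σ-ordering of `P`: a strict
total well-founded order with `1` minimal, compatible with multiplication and with
the Σ-action. -/
theorem statement_4 {r : ℕ}
    (lo0 : LinearOrder ((Fin r → ℕ) →₀ ℕ)) (h0 : IsMonOrd lo0)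
    (hshift0 : ∀ (σ : Fin r → ℕ) (m n : (Fin r → ℕ) →₀ ℕ),
      oLT lo0 m n → oLT lo0 (shiftMon0 σ m) (shiftMon0 σ n)) :
    (∀ m n : (ℕ × (Fin r → ℕ)) →₀ ℕ,
        ilt (oLT lo0) m n ∨ m = n ∨ ilt (oLT lo0) n m) ∧
    (∀ m : (ℕ × (Fin r → ℕ)) →₀ ℕ, ¬ ilt (oLT lo0) m m) ∧
    (∀ a b c : (ℕ × (Fin r → ℕ)) →₀ ℕ,
        ilt (oLT lo0) a b → ilt (oLT lo0) b c → ilt (oLT lo0) a c) ∧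
    WellFounded (ilt (oLT lo0)) ∧
    (∀ m : (ℕ × (Fin r → ℕ)) →₀ ℕ, ¬ ilt (oLT lo0) m 0) ∧
    (∀ m n t : (ℕ × (Fin r → ℕ)) →₀ ℕ,
        ilt (oLT lo0) m n → ilt (oLT lo0) (t + m) (t + n)) ∧
    (∀ (σ : Fin r → ℕ) (m n : (ℕ × (Fin r → ℕ)) →₀ ℕ),
        ilt (oLT lo0) m n → ilt (oLT lo0) (shiftMon σ m) (shiftMon σ n)) := by
  set L := lexOrder (α := ℕᵒᵈ) lo0
  have hL : IsMonOrd L := h0.lexOrder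
  rw [ilt_eq_invImage_blocks]
  refine ⟨fun m n => ?_, fun m => oLT_irrefl L _, fun a b c => oLT_trans L, InvImage.wf _ hL.wf,
    fun m => ?_, fun m n t h => ?_, fun σ m n h => ?_⟩
  · exact (oLT_trichotomy L _ _).imp_right (Or.imp_left (blocks_injective ·))
  · change ¬ oLT L (blocks m) (blocks 0)
    rw [blocks_zero]
    exact hL.not_oLT_zero _
  · change oLT L (blocks (t + m)) (blocks (t + n))
    rw [blocks_add, blocks_add]
    exact hL.add_lt _ _ _ h
  · change oLT L (blocks (shiftMon σ m)) (blocks (shiftMon σ n))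
    rw [blocks_shiftMon, blocks_shiftMon]
    exact lex_mapRange (shiftMon0_zero σ) (hshift0 σ) h
end

section
/- Truncated termination over the weight: assume X is finite and < is a sequential monomial ordering of Σ, and let P be endowed with a monomial Σ-ordering. Let I ⊆ P be a w-graded Σ-ideal and fix δ ∈ Σ. If I has a w-homogeneous Σ-basis H such that H_δ = {f ∈ H : w(f) ≤ δ} is finite, then I has a w-homogeneous Gröbner Σ-basis G such that G_δ = {f ∈ G : w(f) ≤ δ} is finite. -/
/-!
Only the part of `G` of weight `≤ δ` has to be finite. A monomial of weight `≤ δ` involves only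
the finitely many variables `x(τ)` with `x ∈ X` and `τ ≤ δ`, so by Dickson's lemma finitely
many `w`-homogeneous elements of `I` of weight `≤ δ` have leading monomials dividing the leading
monomial of every other such element. Adding all `w`-homogeneous elements of `I` of weight
`> δ` gives `G`. Since `I` is `w`-graded, the leading monomial of any `f ∈ I` is the leading
monomial of the homogeneous component of `f` of weight `w(lm f)`, which lies in `I`; and
`lm(σ g) = σ lm(g)` because the monomial ordering is a Σ-ordering.
-/

open MvPolynomial

section LeadingMonomial

variable {K V : Type*} [CommSemiring K] {r : ℕ} (lo : LinearOrder ((V × (Fin r → ℕ)) →₀ ℕ))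

theorem lmo_mem_support {f : MvPolynomial (V × (Fin r → ℕ)) K} (hf : f ≠ 0) :
    lmo lo f ∈ f.support := by
  rw [lmo, dif_neg hf]
  exact @Finset.max'_mem _ lo _ _

theorem le_lmo {f : MvPolynomial (V × (Fin r → ℕ)) K} {m : (V × (Fin r → ℕ)) →₀ ℕ}
    (hm : m ∈ f.support) : oLE lo m (lmo lo f) := by
  have hf : f ≠ 0 := by rintro rfl; simp at hm
  rw [lmo, dif_neg hf]
  exact @Finset.le_max' _ lo _ _ hm

theorem lmo_eq_of_forall_le {f : MvPolynomial (V × (Fin r → ℕ)) K}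
    {m : (V × (Fin r → ℕ)) →₀ ℕ} (hm : m ∈ f.support) (h : ∀ n ∈ f.support, oLE lo n m) :
    lmo lo f = m := by
  have hf : f ≠ 0 := by rintro rfl; simp at hm
  exact @le_antisymm _ lo.toPartialOrder _ _ (h _ (lmo_mem_support lo hf)) (le_lmo lo hm)

end LeadingMonomial

section Shift

variable {K V : Type*} [CommSemiring K] {r : ℕ}

theorem shift_injective (σ : Fin r → ℕ) :
    Function.Injective (fun p : V × (Fin r → ℕ) => (p.1, σ + p.2)) :=
  fun _ _ h => by
    simp only [Prod.mk.injEq] at h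
    exact Prod.ext h.1 (add_left_cancel h.2)

theorem shiftMon_zero (m : (V × (Fin r → ℕ)) →₀ ℕ) : shiftMon 0 m = m := by
  simp only [shiftMon, zero_add]
  exact Finsupp.mapDomain_id

theorem shiftPoly_ne_zero (σ : Fin r → ℕ) {f : MvPolynomial (V × (Fin r → ℕ)) K} (hf : f ≠ 0) :
    shiftPoly K σ f ≠ 0 :=
  (map_ne_zero_iff _ (rename_injective _ (shift_injective σ))).2 hf

theorem mem_support_shiftPoly (σ : Fin r → ℕ) (f : MvPolynomial (V × (Fin r → ℕ)) K)
    (n : (V × (Fin r → ℕ)) →₀ ℕ) :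
    n ∈ (shiftPoly K σ f).support ↔ ∃ m ∈ f.support, shiftMon σ m = n := by
  classical
  rw [shiftPoly, support_rename_of_injective (shift_injective σ), Finset.mem_image]
  rfl

theorem lmo_shiftPoly (lo : LinearOrder ((V × (Fin r → ℕ)) →₀ ℕ))
    (hshift : ∀ (σ : Fin r → ℕ) (m n : (V × (Fin r → ℕ)) →₀ ℕ),
      oLT lo m n → oLT lo (shiftMon σ m) (shiftMon σ n))
    (σ : Fin r → ℕ) {f : MvPolynomial (V × (Fin r → ℕ)) K} (hf : f ≠ 0) :
    lmo lo (shiftPoly K σ f) = shiftMon σ (lmo lo f) := by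
  refine lmo_eq_of_forall_le lo ((mem_support_shiftPoly σ f _).2 ⟨_, lmo_mem_support lo hf, rfl⟩)
    fun n hn => ?_
  obtain ⟨m, hm, rfl⟩ := (mem_support_shiftPoly σ f _).1 hn
  rcases @lt_or_eq_of_le _ lo.toPartialOrder _ _ (le_lmo lo hm) with hlt | heq
  · exact @le_of_lt _ lo.toPreorder _ _ (hshift σ _ _ hlt)
  · exact heq ▸ @le_refl _ lo.toPreorder _

end Shift

section FilterMonomials

variable {R σ ι : Type*} [CommSemiring R]

noncomputable def filterMonomials (p : (σ →₀ ℕ) → Prop) (f : MvPolynomial σ R) :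
    MvPolynomial σ R :=
  haveI := Classical.decPred p
  AddMonoidAlgebra.ofCoeff ((AddMonoidAlgebra.coeff f).filter p)

variable (p : (σ →₀ ℕ) → Prop)

theorem coeff_filterMonomials_of_pos (f : MvPolynomial σ R) {m : σ →₀ ℕ} (hm : p m) :
    coeff m (filterMonomials p f) = coeff m f :=
  by classical exact Finsupp.filter_apply_pos _ _ hm

theorem coeff_filterMonomials_of_neg (f : MvPolynomial σ R) {m : σ →₀ ℕ} (hm : ¬ p m) :
    coeff m (filterMonomials p f) = 0 :=
  by classical exact Finsupp.filter_apply_neg _ _ hm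

theorem mem_support_filterMonomials (f : MvPolynomial σ R) (m : σ →₀ ℕ) :
    m ∈ (filterMonomials p f).support ↔ m ∈ f.support ∧ p m := by
  classical
  by_cases hm : p m
  · simp [mem_support_iff, coeff_filterMonomials_of_pos p f hm, hm]
  · simp [mem_support_iff, coeff_filterMonomials_of_neg p f hm, hm]

theorem filterMonomials_add (f g : MvPolynomial σ R) :
    filterMonomials p (f + g) = filterMonomials p f + filterMonomials p g := by
  classical
  ext m
  by_cases hm : p m
  · simp only [coeff_filterMonomials_of_pos _ _ hm, coeff_add]
  · simp only [coeff_filterMonomials_of_neg _ _ hm, coeff_add, add_zero]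

theorem filterMonomials_add_filterMonomials_not (f : MvPolynomial σ R) :
    filterMonomials p f + filterMonomials (¬ p ·) f = f := by
  classical
  ext m
  by_cases hm : p m
  · rw [coeff_add, coeff_filterMonomials_of_pos _ _ hm,
      coeff_filterMonomials_of_neg (¬ p ·) _ (not_not_intro hm), add_zero]
  · rw [coeff_add, coeff_filterMonomials_of_neg _ _ hm,
      coeff_filterMonomials_of_pos (¬ p ·) _ hm, zero_add]

theorem filterMonomials_eq_self {f : MvPolynomial σ R} (h : ∀ m ∈ f.support, p m) :
    filterMonomials p f = f := by
  classical
  ext m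
  by_cases hm : p m
  · rw [coeff_filterMonomials_of_pos _ _ hm]
  · rw [coeff_filterMonomials_of_neg _ _ hm, notMem_support_iff.1 fun hs => hm (h m hs)]

theorem filterMonomials_eq_zero {f : MvPolynomial σ R} (h : ∀ m ∈ f.support, ¬ p m) :
    filterMonomials p f = 0 := by
  classical
  ext m
  by_cases hm : p m
  · rw [coeff_filterMonomials_of_pos _ _ hm, coeff_zero, notMem_support_iff.1 fun hs => h m hs hm]
  · rw [coeff_filterMonomials_of_neg _ _ hm, coeff_zero]

variable (w : (σ →₀ ℕ) → ι)

/-- Multiplying by a `w`-homogeneous `x` shifts weights uniformly, so the weight-`μ` part of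
`a * x` is `q * x` for the part `q` of `a` that lands in weight `μ`. -/
theorem exists_filterMonomials_mul_eq (hw : ∀ m m' n, w m = w m' → w (m + n) = w (m' + n))
    {x : MvPolynomial σ R}
    (hx : ∀ m ∈ x.support, ∀ n ∈ x.support, w m = w n) (a : MvPolynomial σ R) (μ : ι) :
    ∃ q, filterMonomials (w · = μ) (a * x) = q * x := by
  classical
  rcases x.support.eq_empty_or_nonempty with hx0 | ⟨n₀, hn₀⟩
  · exact ⟨0, by rw [support_eq_empty.1 hx0, mul_zero, zero_mul, filterMonomials_eq_zero]; simp⟩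
  have hweight : ∀ m, ∀ n ∈ x.support, w (m + n) = w (m + n₀) := fun m n hn => by
    rw [add_comm m, add_comm m]; exact hw n n₀ m (hx n hn n₀ hn₀)
  have hsupp : ∀ (b : MvPolynomial σ R), ∀ m' ∈ (b * x).support,
      ∃ m ∈ b.support, w m' = w (m + n₀) := fun b m' hm' => by
    obtain ⟨m, hm, n, hn, rfl⟩ := Finset.mem_add.1 (support_mul b x hm')
    exact ⟨m, hm, hweight m n hn⟩
  set P : (σ →₀ ℕ) → Prop := fun m => w (m + n₀) = μ
  have hin : filterMonomials (w · = μ) (filterMonomials P a * x) = filterMonomials P a * x :=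
    filterMonomials_eq_self _ fun m' hm' => by
      obtain ⟨m, hm, he⟩ := hsupp _ m' hm'
      exact he ▸ ((mem_support_filterMonomials _ _ _).1 hm).2
  have hout : filterMonomials (w · = μ) (filterMonomials (¬ P ·) a * x) = 0 :=
    filterMonomials_eq_zero _ fun m' hm' => by
      obtain ⟨m, hm, he⟩ := hsupp _ m' hm'
      exact he ▸ ((mem_support_filterMonomials _ _ _).1 hm).2
  refine ⟨filterMonomials P a, ?_⟩
  conv_lhs => rw [← filterMonomials_add_filterMonomials_not P a, add_mul, filterMonomials_add]
  rw [hin, hout, add_zero]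

theorem filterMonomials_mem_of_mem_span
    (hw : ∀ m m' n, w m = w m' → w (m + n) = w (m' + n))
    {I : Ideal (MvPolynomial σ R)} {S : Set (MvPolynomial σ R)}
    (hS : ∀ g ∈ S, g ∈ I ∧ ∀ m ∈ g.support, ∀ n ∈ g.support, w m = w n)
    {f : MvPolynomial σ R} (hf : f ∈ Ideal.span S) (μ : ι) :
    filterMonomials (w · = μ) f ∈ I := by
  suffices h : ∀ a ν, filterMonomials (w · = ν) (a * f) ∈ I by simpa using h 1 μ
  induction hf using Submodule.span_induction with
  | mem x hx =>
    intro a ν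
    obtain ⟨q, hq⟩ := exists_filterMonomials_mul_eq w hw (hS x hx).2 a ν
    exact hq ▸ I.mul_mem_left q (hS x hx).1
  | zero =>
    intro a ν
    rw [mul_zero, filterMonomials_eq_zero _ (by simp)]
    exact I.zero_mem
  | add x y _ _ hx hy =>
    intro a ν
    rw [mul_add, filterMonomials_add]
    exact I.add_mem (hx a ν) (hy a ν)
  | smul b x _ hx =>
    intro a ν
    rw [smul_eq_mul, ← mul_assoc]
    exact hx (a * b) ν

end FilterMonomials

section Weight

variable {K V : Type*} [CommSemiring K] {r : ℕ} (loS : LinearOrder (Fin r → ℕ))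

theorem wfun_add (m n : (V × (Fin r → ℕ)) →₀ ℕ) :
    wfun loS (m + n) = hatAdd loS (wfun loS m) (wfun loS n) := by
  classical
  rw [wfun, wfun, wfun, Finsupp.support_add_eq_union, Finset.image_union]
  convert @Finset.max_union _ loS _ _
  rfl

theorem le_of_mem_support_of_wfun_le {m : (V × (Fin r → ℕ)) →₀ ℕ} {p : V × (Fin r → ℕ)}
    (hp : p ∈ m.support) {δ : Fin r → ℕ} (hm : hatLe loS (wfun loS m) δ) : oLE loS p.2 δ :=
  (@WithBot.coe_le_coe _ _ _ loS.toLE).1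
    ((@Finset.max_le_iff _ loS _ _).1 hm _ (Finset.mem_image_of_mem _ hp))

theorem exists_isWHomog_lmo_eq (lo : LinearOrder ((V × (Fin r → ℕ)) →₀ ℕ))
    {I : Ideal (MvPolynomial (V × (Fin r → ℕ)) K)}
    (hIgr : I = Ideal.span {f | f ∈ I ∧ IsWHomog loS f})
    {f : MvPolynomial (V × (Fin r → ℕ)) K} (hf : f ∈ I) (hf0 : f ≠ 0) :
    ∃ g ∈ I, g ≠ 0 ∧ IsWHomog loS g ∧ lmo lo g = lmo lo f := by
  set g := filterMonomials (wfun loS · = wfun loS (lmo lo f)) f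
  have hmem : ∀ n, n ∈ g.support ↔ n ∈ f.support ∧ wfun loS n = wfun loS (lmo lo f) :=
    mem_support_filterMonomials _ f
  have hlm : lmo lo f ∈ g.support := (hmem _).2 ⟨lmo_mem_support lo hf0, rfl⟩
  have hwadd : ∀ m m' n : (V × (Fin r → ℕ)) →₀ ℕ,
      wfun loS m = wfun loS m' → wfun loS (m + n) = wfun loS (m' + n) := fun m m' n h => by
    rw [wfun_add, wfun_add, h]
  refine ⟨g, filterMonomials_mem_of_mem_span _ hwadd (fun _ hg => hg) (hIgr ▸ hf) _,
    fun h => by simp [h] at hlm, fun m hm n hn => ((hmem m).1 hm).2.trans ((hmem n).1 hn).2.symm,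
    lmo_eq_of_forall_le lo hlm fun n hn => le_lmo lo ((hmem n).1 hn).1⟩

end Weight

theorem isPWO_setOf_support_subset {α : Type*} {F : Set α} (hF : F.Finite) :
    {m : α →₀ ℕ | ↑m.support ⊆ F}.IsPWO := by
  classical
  have : Finite F := hF.to_subtype
  refine ((Set.isPWO_of_wellQuasiOrderedLE Set.univ).image_of_monotone
    (Finsupp.embDomain_mono (Function.Embedding.subtype (· ∈ F)))).mono fun m hm => ?_
  refine ⟨m.subtypeDomain (· ∈ F), trivial, ?_⟩
  rw [← Finsupp.extendDomain_eq_embDomain_subtype,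
    Finsupp.extendDomain_subtypeDomain _ fun a ha => hm ha]

theorem exists_finite_subset_forall_le {α β : Type*} {F : Set α} (hF : F.Finite)
    (f : β → α →₀ ℕ) {T : Set β} (hT : ∀ t ∈ T, ↑(f t).support ⊆ F) :
    ∃ T₀ ⊆ T, T₀.Finite ∧ ∀ t ∈ T, ∃ t₀ ∈ T₀, f t₀ ≤ f t := by
  have hpwo : (f '' T).IsPWO :=
    (isPWO_setOf_support_subset hF).mono (Set.image_subset_iff.2 hT)
  set M := {x | Minimal (· ∈ f '' T) x}
  have hMfin : M.Finite := (setOfPred_minimal_antichain _).finite_of_partiallyWellOrderedOn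
    (hpwo.mono (setOfPred_minimal_subset _))
  obtain ⟨T₀, hT₀, hbij⟩ := Set.exists_subset_bijOn (T ∩ f ⁻¹' M) f
  refine ⟨T₀, hT₀.trans Set.inter_subset_left, ?_, fun t ht => ?_⟩
  · refine Set.Finite.of_finite_image (hMfin.subset ?_) hbij.injOn
    exact hbij.image_eq ▸
      (Set.image_mono Set.inter_subset_right).trans (Set.image_preimage_subset f M)
  · obtain ⟨x, hxt, hxM⟩ := hpwo.exists_le_minimal (Set.mem_image_of_mem f ht)
    obtain ⟨t', ht', rfl⟩ := hxM.1
    obtain ⟨t₀, ht₀, he⟩ := hbij.surjOn ⟨t', ⟨ht', hxM⟩, rfl⟩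
    exact ⟨t₀, ht₀, he ▸ hxt⟩

theorem isSigmaGBasis_of_forall_exists_lmo_le {K V : Type*} [Field K] {r : ℕ}
    (lo : LinearOrder ((V × (Fin r → ℕ)) →₀ ℕ))
    (hshift : ∀ (σ : Fin r → ℕ) (m n : (V × (Fin r → ℕ)) →₀ ℕ),
      oLT lo m n → oLT lo (shiftMon σ m) (shiftMon σ n))
    {I : Ideal (MvPolynomial (V × (Fin r → ℕ)) K)} (hI : IsSigmaIdeal I)
    {G : Set (MvPolynomial (V × (Fin r → ℕ)) K)} (hGI : G ⊆ I)
    (hG : ∀ f ∈ I, f ≠ 0 → ∃ g ∈ G, g ≠ 0 ∧ lmo lo g ≤ lmo lo f) :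
    IsSigmaGBasis lo G I := by
  refine ⟨hGI, le_antisymm (Ideal.span_le.2 ?_) (Ideal.span_le.2 ?_)⟩
  · rintro _ ⟨f, ⟨hfI, hf0⟩, rfl⟩
    dsimp only
    obtain ⟨g, hg, hg0, hle⟩ := hG f hfI hf0
    have hdvd : monomial (lmo lo f) (1 : K) =
        monomial (lmo lo f - lmo lo g) 1 * monomial (shiftMon 0 (lmo lo g)) 1 := by
      rw [shiftMon_zero, monomial_mul, one_mul, tsub_add_cancel_of_le hle]
    rw [SetLike.mem_coe, hdvd]
    exact Ideal.mul_mem_left _ _ (Ideal.subset_span ⟨0, g, hg, hg0, rfl⟩)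
  · rintro _ ⟨σ, g, hg, hg0, rfl⟩
    exact Ideal.subset_span ⟨shiftPoly K σ g, ⟨hI σ g (hGI hg), shiftPoly_ne_zero σ hg0⟩,
      congrArg (monomial · 1) (lmo_shiftPoly lo hshift σ hg0)⟩

theorem statement_11_general {K : Type*} [Field K] {X : Type*} [Fintype X] {r : ℕ}
    (loS : LinearOrder (Fin r → ℕ))
    (hseq : ∀ σ : Fin r → ℕ, {τ : Fin r → ℕ | oLE loS τ σ}.Finite)
    (lo : LinearOrder ((X × (Fin r → ℕ)) →₀ ℕ))
    (hshift : ∀ (σ : Fin r → ℕ) (m n : (X × (Fin r → ℕ)) →₀ ℕ),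
      oLT lo m n → oLT lo (shiftMon σ m) (shiftMon σ n))
    (I : Ideal (MvPolynomial (X × (Fin r → ℕ)) K))
    (hIsig : IsSigmaIdeal I)
    (hIgr : I = Ideal.span {f | f ∈ I ∧ IsWHomog loS f})
    (δ : Fin r → ℕ) :
    ∃ G : Set (MvPolynomial (X × (Fin r → ℕ)) K),
      (∀ f ∈ G, IsWHomog loS f) ∧ IsSigmaGBasis lo G I ∧
      {f | f ∈ G ∧
        ∀ m ∈ f.support, hatLe loS (wfun loS m) (δ : WithBot (Fin r → ℕ))}.Finite := by
  set IsLow : MvPolynomial (X × (Fin r → ℕ)) K → Prop :=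
    fun f => ∀ m ∈ f.support, hatLe loS (wfun loS m) (δ : WithBot (Fin r → ℕ))
  obtain ⟨G₀, hG₀, hG₀fin, hG₀min⟩ := exists_finite_subset_forall_le
    (Set.finite_univ.prod (hseq δ)) (lmo lo)
    (T := {g | g ∈ I ∧ g ≠ 0 ∧ IsWHomog loS g ∧ IsLow g}) fun g hg p hp =>
      ⟨trivial, le_of_mem_support_of_wfun_le loS hp (hg.2.2.2 _ (lmo_mem_support lo hg.2.1))⟩
  refine ⟨G₀ ∪ {g | g ∈ I ∧ g ≠ 0 ∧ IsWHomog loS g ∧ ¬ IsLow g}, ?_,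
    isSigmaGBasis_of_forall_exists_lmo_le lo hshift hIsig ?_ fun f hfI hf0 => ?_,
    hG₀fin.subset ?_⟩
  · rintro f (hf | hf)
    exacts [(hG₀ hf).2.2.1, hf.2.2.1]
  · rintro f (hf | hf)
    exacts [(hG₀ hf).1, hf.1]
  · obtain ⟨g, hgI, hg0, hghom, hlm⟩ := exists_isWHomog_lmo_eq loS lo hIgr hfI hf0
    by_cases hlow : IsLow g
    · obtain ⟨t, ht, hle⟩ := hG₀min g ⟨hgI, hg0, hghom, hlow⟩
      exact ⟨t, Or.inl ht, (hG₀ ht).2.1, hlm ▸ hle⟩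
    · exact ⟨g, Or.inr ⟨hgI, hg0, hghom, hlow⟩, hg0, hlm.le⟩
  · rintro f ⟨hf | hf, hlow⟩
    exacts [hf, absurd hlow hf.2.2.2]

/-- **truncated termination over the weight.** `X` finite, `<` a
sequential monomial ordering of `Σ`, `P` endowed with a monomial Σ-ordering. If a
`w`-graded Σ-ideal `I ⊆ P` has a `w`-homogeneous Σ-basis `H` with
`H_δ = {f ∈ H : w(f) ≤ δ}` finite, then `I` has a `w`-homogeneous Gröbner Σ-basis
`G` with `G_δ` finite. -/
theorem statement_11 {K : Type*} [Field K] {X : Type*} [Fintype X] {r : ℕ}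
    (loS : LinearOrder (Fin r → ℕ)) (hS : IsMonOrd loS)
    (hseq : ∀ σ : Fin r → ℕ, {τ : Fin r → ℕ | oLE loS τ σ}.Finite)
    (lo : LinearOrder ((X × (Fin r → ℕ)) →₀ ℕ)) (h : IsMonOrd lo)
    (hshift : ∀ (σ : Fin r → ℕ) (m n : (X × (Fin r → ℕ)) →₀ ℕ),
      oLT lo m n → oLT lo (shiftMon σ m) (shiftMon σ n))
    (I : Ideal (MvPolynomial (X × (Fin r → ℕ)) K))
    (hIsig : IsSigmaIdeal I)
    (hIgr : I = Ideal.span {f | f ∈ I ∧ IsWHomog loS f})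
    (δ : Fin r → ℕ)
    (H : Set (MvPolynomial (X × (Fin r → ℕ)) K))
    (hHI : H ⊆ ↑I)
    (hHhom : ∀ f ∈ H, IsWHomog loS f)
    (hHgen : I = Ideal.span (shiftSet K H))
    (hHfin : {f | f ∈ H ∧
      ∀ m ∈ f.support, hatLe loS (wfun loS m) (δ : WithBot (Fin r → ℕ))}.Finite) :
    ∃ G : Set (MvPolynomial (X × (Fin r → ℕ)) K),
      (∀ f ∈ G, IsWHomog loS f) ∧ IsSigmaGBasis lo G I ∧
      {f | f ∈ G ∧
        ∀ m ∈ f.support, hatLe loS (wfun loS m) (δ : WithBot (Fin r → ℕ))}.Finite :=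
  statement_11_general loS hseq lo hshift I hIsig hIgr δ
end
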